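/- Let H be a closed m-shift system for f, and let W be a set which locally divides H and which contains every minimal set of f that is contained in the core Z_0(H). Then there exists β < log m such that every periodic orbit P of f which is contained in the domain D(H) but not contained in W has virtual entropy at most β: ĥ(P) ≤ β. -/

import Mathlib

open Dynamics

/-- Discrete uniformity on `Fin m`, compatible with its discrete topology. -/
instance (m : ℕ) : UniformSpace (Fin m) := ⊥

/-- The one-sided shift map on `Σ_m = {1,…,m}^ℕ`, modelled as `ℕ → Fin m`. -/
def shiftMap (m : ℕ) : (ℕ → Fin m) → (ℕ → Fin m) := fun a n => a (n + 1)

variable {X : Type*}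

/-- `H = (H_1, …, H_m)` is an `m`-shift system for `f`: each `H i` is nonempty and
`f(H_i) ⊇ H_1 ∪ ⋯ ∪ H_m` for every `i`. -/
def IsShiftSystem (f : X → X) {m : ℕ} (H : Fin m → Set X) : Prop :=
  (∀ i, (H i).Nonempty) ∧ ∀ i, (⋃ j, H j) ⊆ f '' H i

/-- A closed `m`-shift system: an `m`-shift system all of whose sets are closed. -/
def IsClosedShiftSystem [TopologicalSpace X] (f : X → X) {m : ℕ} (H : Fin m → Set X) : Prop :=
  IsShiftSystem f H ∧ ∀ i, IsClosed (H i)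

/-- The itinerary set `It(x)` of a point `x`. -/
def itin (f : X → X) {m : ℕ} (H : Fin m → Set X) (x : X) : Set (ℕ → Fin m) :=
  {a | ∀ i : ℕ, f^[i] x ∈ H (a i)}

/-- The itinerary set `It(S) = ⋃_{x ∈ S} It(x)` of a subset `S ⊆ X`. -/
def itinSet (f : X → X) {m : ℕ} (H : Fin m → Set X) (S : Set X) : Set (ℕ → Fin m) :=
  ⋃ x ∈ S, itin f H x

/-- The `n`-itinerary set `It_n(x)` of a point `x`. -/
def itinN (f : X → X) {m : ℕ} (H : Fin m → Set X) (n : ℕ) (x : X) : Set (Fin n → Fin m) :=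
  {w | ∀ i : Fin n, f^[(i : ℕ)] x ∈ H (w i)}

/-- `A(n)`: the set of initial subwords of length `n` of elements of `A ⊆ Σ_m`. -/
def initWords {m : ℕ} (A : Set (ℕ → Fin m)) (n : ℕ) : Set (Fin n → Fin m) :=
  (fun (a : ℕ → Fin m) (i : Fin n) => a (i : ℕ)) '' A

/-- `π(w) = ⋂_{i<n} f^{-i}(H_{w_i})` for a finite word `w`. -/
def piWord (f : X → X) {m n : ℕ} (H : Fin m → Set X) (w : Fin n → Fin m) : Set X :=
  ⋂ i : Fin n, f^[(i : ℕ)] ⁻¹' H (w i)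

/-- `π(α) = ⋂_{i≥0} f^{-i}(H_{α_i})` for a sequence `α ∈ Σ_m`. -/
def piSeq (f : X → X) {m : ℕ} (H : Fin m → Set X) (α : ℕ → Fin m) : Set X :=
  ⋂ i : ℕ, f^[i] ⁻¹' H (α i)

/-- `π(A) = ⋃_{w ∈ A} π(w)` for a set `A` of `n`-words. -/
def piWordSet (f : X → X) {m n : ℕ} (H : Fin m → Set X) (A : Set (Fin n → Fin m)) : Set X :=
  ⋃ w ∈ A, piWord f H w

/-- `π(A) = ⋃_{α ∈ A} π(α)` for a set `A ⊆ Σ_m` of sequences. -/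
def piSeqSet (f : X → X) {m : ℕ} (H : Fin m → Set X) (A : Set (ℕ → Fin m)) : Set X :=
  ⋃ α ∈ A, piSeq f H α

/-- The center `C(H) = ⋂ i, H i`. -/
def centerSet {m : ℕ} (H : Fin m → Set X) : Set X := ⋂ i, H i

/-- The core `Z_0(H) = ⋂_{k≥0} f^{-k}(C(H))`. -/
def coreSet (f : X → X) {m : ℕ} (H : Fin m → Set X) : Set X :=
  ⋂ k : ℕ, f^[k] ⁻¹' centerSet H

/-- The domain `D(H) = ⋂_{k≥0} f^{-k}(ℍ)` where `ℍ = H_1 ∪ ⋯ ∪ H_m`. -/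
def domainSet (f : X → X) {m : ℕ} (H : Fin m → Set X) : Set X :=
  ⋂ k : ℕ, f^[k] ⁻¹' (⋃ j, H j)

/-- The kernel `Ker(H)`: points lying in at least two of the sets `H i`. -/
def kernelSet {m : ℕ} (H : Fin m → Set X) : Set X :=
  {x | ∃ i j, i ≠ j ∧ x ∈ H i ∧ x ∈ H j}

/-- The kernel of `H` is eventually countable: some image `f^j(Ker(H))` is countable. -/
def EventuallyCountableKernel (f : X → X) {m : ℕ} (H : Fin m → Set X) : Prop :=
  ∃ j : ℕ, (f^[j] '' kernelSet H).Countable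

/-- `H` is nontrivial: `H_i \ Z_0(H) ≠ ∅` for every `i`. -/
def IsNontrivialShiftSystem (f : X → X) {m : ℕ} (H : Fin m → Set X) : Prop :=
  ∀ i, (H i \ coreSet f H).Nonempty

/-- A minimal set of `f`: a nonempty closed invariant set with no proper nonempty closed
invariant subset. -/
def IsMinimalSet [TopologicalSpace X] (f : X → X) (M : Set X) : Prop :=
  M.Nonempty ∧ IsClosed M ∧ f '' M ⊆ M ∧
    ∀ M' : Set X, M' ⊆ M → M'.Nonempty → IsClosed M' → f '' M' ⊆ M' → M' = M

/-- A shift-minimal subset of `Σ_m`. -/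
def IsShiftMinimal {m : ℕ} (Γ : Set (ℕ → Fin m)) : Prop :=
  Γ.Nonempty ∧ IsClosed Γ ∧ shiftMap m '' Γ ⊆ Γ ∧
    ∀ Γ' : Set (ℕ → Fin m), Γ' ⊆ Γ → Γ'.Nonempty → IsClosed Γ' →
      shiftMap m '' Γ' ⊆ Γ' → Γ' = Γ

/-- A periodic orbit of `f`. -/
def IsPeriodicOrbit (f : X → X) (P : Set X) : Prop :=
  ∃ (x : X) (n : ℕ), 0 < n ∧ f^[n] x = x ∧ P = Set.range fun i => f^[i] x

/-- The virtual entropy `ĥ(S)`: the topological entropy of the shift restricted to `It(S)`. -/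
noncomputable def virtualEntropy (f : X → X) {m : ℕ} (H : Fin m → Set X) (S : Set X) : EReal :=
  coverEntropy (shiftMap m) (itinSet f H S)

/-- `W` locally divides the shift system `H`. -/
def LocallyDivides [TopologicalSpace X] (f : X → X) {m : ℕ} (H : Fin m → Set X)
    (W : Set X) : Prop :=
  f '' W ⊆ W ∧ (∀ i, (H i \ W).Nonempty) ∧
    ∃ Λ : Set (ℕ → Fin m), IsClosed Λ ∧ shiftMap m '' Λ ⊆ Λ ∧
      coverEntropy (shiftMap m) Λ < (Real.log m : EReal) ∧
      ∃ V ∈ nhdsSet W, ∀ (x : X) (n : ℕ), 1 ≤ n →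
        (∀ i < n, f^[i] x ∈ V \ W) → itinN f H n x ⊆ initWords Λ n

/-- The ω-limit set of `x` under `f`. -/
def omegaLimitSet [TopologicalSpace X] (f : X → X) (x : X) : Set X :=
  ⋂ N : ℕ, closure (Set.range fun n : ℕ => f^[N + n] x)

/-- `limsup` of a sequence of sets: `⋂_{k≥1} ⋃_{i≥k} A_i`. -/
def limsupSets {β : Type*} (A : ℕ → Set β) : Set β :=
  ⋂ k : ℕ, ⋃ i : ℕ, ⋃ _ : k ≤ i, A i

/-!
A closed set `Λ` of entropy below `log m` misses some word of some length `n`. By compactness,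
and because every minimal set inside the core lies in `W`, there is a window length `L` such that
within any `L` consecutive steps an orbit either leaves the center `C(H)`, where at most `m - 1`
symbols are available, or spends `n` consecutive steps in a neighbourhood `V` of `W`, where away
from `W` its itineraries follow `Λ`. So an orbit avoiding `W` has at most `B < m ^ L` itineraries
of length `L`, and by submultiplicativity `O(B ^ (k / L))` of length `k`. A periodic orbit not
contained in the invariant set `W` avoids it altogether, so its virtual entropy is at most
`log B / L < log m`. When `m ≤ 1` the domain is the core, and a periodic orbit, being a minimal
set, lies in `W`.
-/

open Filter Function Set Topology Uniformity ENNReal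

lemma ENNReal.log_natCast {n : ℕ} (hn : n ≠ 0) : ENNReal.log n = Real.log n := by
  rw [← ENNReal.ofReal_natCast, ENNReal.log_ofReal_of_pos (by positivity)]

section ShiftSpace

variable {m : ℕ}

def prefixRel (m k : ℕ) : SetRel (ℕ → Fin m) (ℕ → Fin m) := {p | ∀ j < k, p.1 j = p.2 j}

lemma hasBasis_uniformity_prefixRel (m : ℕ) :
    (𝓤 (ℕ → Fin m)).HasBasis (fun _ => True) (prefixRel m) := by
  have h : 𝓤 (ℕ → Fin m) = ⨅ j, 𝓟 {p : (ℕ → Fin m) × (ℕ → Fin m) | p.1 j = p.2 j} := by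
    simp only [Pi.uniformity, show 𝓤 (Fin m) = 𝓟 SetRel.id from rfl, comap_principal]
    rfl
  rw [h]
  refine (hasBasis_iInf_principal_finite _).to_hasBasis (fun t ht => ?_) (fun k _ => ?_)
  · obtain ⟨k, hk⟩ := ht.bddAbove
    exact ⟨k + 1, trivial, fun p hp => mem_iInter₂.2 fun j hj => hp j (Nat.lt_succ_of_le (hk hj))⟩
  · exact ⟨Iio k, finite_Iio k, fun p hp j hj => mem_iInter₂.1 hp j hj⟩

lemma shiftMap_iterate_apply (a : ℕ → Fin m) (i t : ℕ) :
    (shiftMap m)^[i] a t = a (t + i) := by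
  induction i generalizing a with
  | zero => rfl
  | succ i ih => rw [iterate_succ_apply, ih]; rfl

lemma mem_dynEntourage_prefixRel_of_forall {k n : ℕ} {a b : ℕ → Fin m}
    (h : ∀ t < n + k, a t = b t) : (a, b) ∈ dynEntourage (shiftMap m) (prefixRel m k) n :=
  mem_dynEntourage.2 fun i hi j hj => by
    simpa only [shiftMap_iterate_apply] using h (j + i) (by omega)

lemma apply_eq_of_mem_dynEntourage_prefixRel {n t : ℕ} {a b : ℕ → Fin m}
    (h : (a, b) ∈ dynEntourage (shiftMap m) (prefixRel m 1) n) (ht : t < n) : a t = b t := by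
  simpa only [shiftMap_iterate_apply, zero_add] using mem_dynEntourage.1 h t ht 0 one_pos

lemma pow_le_coverMincard_univ (hm : m ≠ 0) (n : ℕ) :
    ((m ^ n : ℕ) : ℕ∞) ≤ coverMincard (shiftMap m) univ (prefixRel m 1) n := by
  rcases eq_top_or_lt_top (coverMincard (shiftMap m) univ (prefixRel m 1) n) with h | h
  · simp [h]
  obtain ⟨s, hs, hcard⟩ := (coverMincard_finite_iff _ _ _ _).1 h
  have hsurj : Surjective fun b : s => fun i : Fin n => (b : ℕ → Fin m) i := by
    intro w
    obtain ⟨b, hb, hab⟩ :=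
      hs (mem_univ fun t => if ht : t < n then w ⟨t, ht⟩ else ⟨0, Nat.pos_of_ne_zero hm⟩)
    exact ⟨⟨b, hb⟩, funext fun i => by simp [← apply_eq_of_mem_dynEntourage_prefixRel hab i.2]⟩
  rw [← hcard]
  have h := Fintype.card_le_of_surjective _ hsurj
  rw [Fintype.card_fun, Fintype.card_fin, Fintype.card_fin, Fintype.card_coe] at h
  exact_mod_cast h

lemma log_le_coverEntropy_univ (hm : m ≠ 0) :
    (Real.log m : EReal) ≤ coverEntropy (shiftMap m) univ :=
  calc (Real.log m : EReal) = ExpGrowth.expGrowthSup fun n => (m : ℝ≥0∞) ^ n := by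
        rw [ExpGrowth.expGrowthSup_pow, ENNReal.log_natCast hm]
    _ ≤ coverEntropyEntourage (shiftMap m) univ (prefixRel m 1) :=
        ExpGrowth.expGrowthSup_monotone fun n => by
          simpa using ENat.toENNReal_le.2 (pow_le_coverMincard_univ hm n)
    _ ≤ coverEntropy (shiftMap m) univ := coverEntropyEntourage_le_coverEntropy _ _
        ((hasBasis_uniformity_prefixRel m).mem_of_mem trivial)

lemma eq_univ_of_initWords_eq_univ {Λ : Set (ℕ → Fin m)} (hΛ : IsClosed Λ)
    (h : ∀ n, 0 < n → initWords Λ n = univ) : Λ = univ := by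
  refine eq_univ_of_forall fun a => ?_
  have hpre : ∀ n, ∃ b ∈ Λ, ∀ i : Fin (n + 1), b i = a i := fun n => by
    obtain ⟨b, hb, hba⟩ : (fun i : Fin (n + 1) => a i) ∈ initWords Λ (n + 1) :=
      h (n + 1) n.succ_pos ▸ mem_univ _
    exact ⟨b, hb, congrFun hba⟩
  choose b hbΛ hba using hpre
  refine hΛ.mem_of_tendsto (tendsto_pi_nhds.2 fun t => (tendsto_const_nhds (f := atTop)).congr' ?_)
    (Eventually.of_forall hbΛ)
  filter_upwards [eventually_ge_atTop t] with n hn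
  exact (hba n ⟨t, Nat.lt_succ_of_le hn⟩).symm

lemma exists_initWords_ne_univ {Λ : Set (ℕ → Fin m)} (hm : m ≠ 0) (hΛ : IsClosed Λ)
    (hent : coverEntropy (shiftMap m) Λ < Real.log m) : ∃ n, 0 < n ∧ initWords Λ n ≠ univ := by
  by_contra! h
  rw [eq_univ_of_initWords_eq_univ hΛ h] at hent
  exact (log_le_coverEntropy_univ hm).not_gt hent

lemma coverMincard_prefixRel_le_ncard_initWords (A : Set (ℕ → Fin m)) (k n : ℕ) :
    coverMincard (shiftMap m) A (prefixRel m k) n ≤ (initWords A (n + k)).ncard := by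
  obtain ⟨s, -, hs⟩ := exists_subset_bijOn A fun (a : ℕ → Fin m) (i : Fin (n + k)) => a i
  have hfin : s.Finite := (toFinite _).of_finite_image hs.injOn
  have hcover : IsDynCoverOf (shiftMap m) A (prefixRel m k) n hfin.toFinset := by
    intro a ha
    obtain ⟨b, hb, hba⟩ := hs.surjOn ⟨a, ha, rfl⟩
    exact ⟨b, hfin.mem_toFinset.2 hb,
      mem_dynEntourage_prefixRel_of_forall fun t ht => (congrFun hba ⟨t, ht⟩).symm⟩
  calc coverMincard (shiftMap m) A (prefixRel m k) n ≤ hfin.toFinset.card :=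
        hcover.coverMincard_le_card
    _ = (initWords A (n + k)).ncard := by
        rw [← ncard_eq_toFinset_card s hfin, initWords, ← hs.image_eq,
          hs.injOn.ncard_image]

lemma coverEntropy_le_of_ncard_initWords_le {A : Set (ℕ → Fin m)} {K B L : ℕ} (hL : L ≠ 0)
    (hcard : ∀ n, (initWords A n).ncard ≤ K * B ^ (n / L)) :
    coverEntropy (shiftMap m) A ≤ ENNReal.log B / L := by
  rw [coverEntropy_eq_iSup_basis (hasBasis_uniformity_prefixRel m)]
  refine iSup₂_le fun k _ => ?_
  set u : ℕ → ℝ≥0∞ := fun n => coverMincard (shiftMap m) A (prefixRel m k) n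
  have hu : Monotone u := fun _ _ h => ENat.toENNReal_mono (coverMincard_monotone_time _ _ _ h)
  have hblock : ExpGrowth.expGrowthSup (fun q => u (L * q)) ≤ ENNReal.log B := by
    rw [← ExpGrowth.expGrowthSup_pow]
    refine ExpGrowth.expGrowthSup_le_of_eventually_le (b := (K * B ^ (k / L) : ℕ))
      (ENNReal.natCast_ne_top _) (Eventually.of_forall fun q => ?_)
    have h := (coverMincard_prefixRel_le_ncard_initWords A k (L * q)).trans
      (Nat.cast_le.2 (hcard (L * q + k)))
    rw [add_comm, Nat.add_mul_div_left _ _ (Nat.pos_of_ne_zero hL), pow_add, ← mul_assoc] at h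
    simpa using ENat.toENNReal_le.2 h
  rw [EReal.le_div_iff_mul_le (by exact_mod_cast Nat.pos_of_ne_zero hL) (EReal.natCast_ne_top L),
    mul_comm, coverEntropyEntourage, ← hu.expGrowthSup_comp_mul hL]
  exact hblock

end ShiftSpace

section Itineraries

variable {X : Type*} {f : X → X} {m : ℕ} {H : Fin m → Set X}

lemma ncard_itinN_le_pow (n : ℕ) (z : X) : (itinN f H n z).ncard ≤ m ^ n := by
  simpa using ncard_le_ncard (subset_univ (itinN f H n z))

lemma ncard_itinN_add_le (a b : ℕ) (z : X) :
    (itinN f H (a + b) z).ncard ≤ (itinN f H a z).ncard * (itinN f H b (f^[a] z)).ncard := by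
  rw [← ncard_prod]
  refine ncard_le_ncard_of_injOn
    (fun w => (fun i => w (Fin.castAdd b i), fun i => w (Fin.natAdd a i))) ?_ ?_
  · intro w hw
    refine ⟨fun i => hw (Fin.castAdd b i), fun i => ?_⟩
    simpa [← iterate_add_apply, add_comm] using hw (Fin.natAdd a i)
  · intro w _ w' _ h
    funext i
    exact Fin.addCases (fun j => congrFun (congrArg Prod.fst h) j)
      (fun j => congrFun (congrArg Prod.snd h) j) i

lemma ncard_itinN_one_le_of_notMem_centerSet {z : X} (hz : z ∉ centerSet H) :
    (itinN f H 1 z).ncard ≤ m - 1 := by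
  obtain ⟨i, hi⟩ : ∃ i, z ∉ H i := by simpa [centerSet] using hz
  calc (itinN f H 1 z).ncard ≤ ({i}ᶜ : Set (Fin m)).ncard :=
        ncard_le_ncard_of_injOn (fun w => w 0) (fun w hw he => hi (he ▸ hw 0))
          (fun w _ w' _ h => funext fun j => Subsingleton.elim j 0 ▸ h)
    _ = m - 1 := by rw [ncard_compl, ncard_singleton, Nat.card_fin]

lemma ncard_itinN_le_of_iterate {k n L c : ℕ} (hL : k + n ≤ L) {z : X}
    (h : (itinN f H n (f^[k] z)).ncard ≤ c) : (itinN f H L z).ncard ≤ c * m ^ (L - n) := by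
  obtain ⟨r, rfl⟩ := Nat.exists_eq_add_of_le hL
  calc (itinN f H (k + n + r) z).ncard ≤ (itinN f H k z).ncard *
        ((itinN f H n (f^[k] z)).ncard * (itinN f H r (f^[n] (f^[k] z))).ncard) := by
        rw [add_assoc]
        exact (ncard_itinN_add_le _ _ _).trans (Nat.mul_le_mul_left _ (ncard_itinN_add_le _ _ _))
    _ ≤ m ^ k * (c * m ^ r) :=
        Nat.mul_le_mul (ncard_itinN_le_pow _ _) (Nat.mul_le_mul h (ncard_itinN_le_pow _ _))
    _ = c * m ^ (k + n + r - n) := by rw [show k + n + r - n = k + r by omega, pow_add]; ring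

lemma ncard_itinN_le_of_forall_iterate (hm : m ≠ 0) {L B : ℕ} (hL : 0 < L) {z : X}
    (h : ∀ t, (itinN f H L (f^[t] z)).ncard ≤ B) (n : ℕ) :
    (itinN f H n z).ncard ≤ m ^ L * B ^ (n / L) := by
  have hblocks : ∀ q, (itinN f H (L * q) z).ncard ≤ B ^ q := by
    intro q
    induction q with
    | zero => simpa using ncard_itinN_le_pow (f := f) (H := H) 0 z
    | succ q ih =>
      calc (itinN f H (L * (q + 1)) z).ncard
          ≤ (itinN f H (L * q) z).ncard * (itinN f H L (f^[L * q] z)).ncard := by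
            rw [mul_add_one]
            exact ncard_itinN_add_le _ _ _
        _ ≤ B ^ (q + 1) := (Nat.mul_le_mul ih (h _)).trans_eq (pow_succ _ _).symm
  calc (itinN f H n z).ncard
      ≤ (itinN f H (L * (n / L)) z).ncard * (itinN f H (n % L) (f^[L * (n / L)] z)).ncard := by
        conv_lhs => rw [← Nat.div_add_mod n L]
        exact ncard_itinN_add_le _ _ _
    _ ≤ B ^ (n / L) * m ^ L := Nat.mul_le_mul (hblocks _) ((ncard_itinN_le_pow _ _).trans
        (Nat.pow_le_pow_right (Nat.pos_of_ne_zero hm) (Nat.mod_lt _ hL).le))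
    _ = m ^ L * B ^ (n / L) := mul_comm _ _

lemma ncard_initWords_itinSet_le {S : Set X} (hS : S.Finite) {n c : ℕ}
    (h : ∀ z ∈ S, (itinN f H n z).ncard ≤ c) :
    (initWords (itinSet f H S) n).ncard ≤ S.ncard * c := by
  have hsub : initWords (itinSet f H S) n ⊆ ⋃ z ∈ hS.toFinset, itinN f H n z := by
    rintro - ⟨a, ha, rfl⟩
    obtain ⟨z, hz, haz⟩ := mem_iUnion₂.1 ha
    exact mem_iUnion₂.2 ⟨z, hS.mem_toFinset.2 hz, fun i => haz i⟩
  calc (initWords (itinSet f H S) n).ncard ≤ ∑ z ∈ hS.toFinset, (itinN f H n z).ncard :=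
        (ncard_le_ncard hsub).trans (hS.toFinset.set_ncard_biUnion_le _)
    _ ≤ hS.toFinset.card • c :=
        Finset.sum_le_card_nsmul _ _ _ fun z hz => h z (hS.mem_toFinset.1 hz)
    _ = S.ncard * c := by rw [smul_eq_mul, ncard_eq_toFinset_card S hS]

end Itineraries

section MinimalSets

variable {X : Type*} {f : X → X}

lemma exists_isMinimalSet_subset [TopologicalSpace X] [CompactSpace X] {F : Set X}
    (hF : IsClosed F) (hne : F.Nonempty) (hfF : f '' F ⊆ F) : ∃ M ⊆ F, IsMinimalSet f M := by
  let S : Set (Set X) := {A | A.Nonempty ∧ IsClosed A ∧ f '' A ⊆ A}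
  have hchain : ∀ c ⊆ S, IsChain (· ⊆ ·) c → c.Nonempty → ∃ lb ∈ S, ∀ A ∈ c, lb ⊆ A := by
    intro c hcS hc hcne
    have : Nonempty c := hcne.to_subtype
    refine ⟨⋂₀ c, ⟨?_, isClosed_sInter fun A hA => (hcS hA).2.1, ?_⟩,
      fun A hA => sInter_subset_of_mem hA⟩
    · rw [sInter_eq_iInter]
      refine IsCompact.nonempty_iInter_of_directed_nonempty_isCompact_isClosed _
        (fun A B => ?_) (fun A => (hcS A.2).1) (fun A => (hcS A.2).2.1.isCompact)
        (fun A => (hcS A.2).2.1)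
      rcases hc.total A.2 B.2 with h | h
      · exact ⟨A, subset_rfl, h⟩
      · exact ⟨B, h, subset_rfl⟩
    · rintro - ⟨x, hx, rfl⟩
      exact mem_sInter.2 fun A hA => (hcS hA).2.2 ⟨x, mem_sInter.1 hx A hA, rfl⟩
  obtain ⟨M, hMF, hM⟩ := zorn_superset_nonempty S hchain F ⟨hne, hF, hfF⟩
  exact ⟨M, hMF, hM.prop.1, hM.prop.2.1, hM.prop.2.2,
    fun M' hM'M hM' hM'cl hfM' => (hM.le_of_le ⟨hM', hM'cl, hfM'⟩ hM'M).antisymm' hM'M⟩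

lemma IsPeriodicOrbit.mapsTo {P : Set X} (hP : IsPeriodicOrbit f P) : MapsTo f P P := by
  obtain ⟨x, n, -, -, rfl⟩ := hP
  rintro - ⟨i, rfl⟩
  exact ⟨i + 1, iterate_succ_apply' f i x⟩

lemma IsPeriodicOrbit.finite {P : Set X} (hP : IsPeriodicOrbit f P) : P.Finite := by
  obtain ⟨x, n, hn, hx, rfl⟩ := hP
  refine ((finite_Iio n).image fun i => f^[i] x).subset ?_
  rintro - ⟨i, rfl⟩
  exact ⟨i % n, Nat.mod_lt i hn, IsPeriodicPt.iterate_mod_apply hx i⟩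

lemma IsPeriodicOrbit.disjoint_or_subset {P S : Set X} (hP : IsPeriodicOrbit f P)
    (hS : MapsTo f S S) : Disjoint P S ∨ P ⊆ S := by
  refine or_iff_not_imp_left.2 fun hPS => ?_
  obtain ⟨x, n, hn, hx, rfl⟩ := hP
  obtain ⟨-, ⟨t, rfl⟩, ht⟩ := not_disjoint_iff_nonempty_inter.1 hPS
  -- `x` is itself an iterate of `f^[t] x`, namely `f^[n * t - t] (f^[t] x) = f^[n * t] x = x`
  have hxS : x ∈ S := by
    have h := hS.iterate (n * t - t) ht
    rwa [← iterate_add_apply, Nat.sub_add_cancel (Nat.le_mul_of_pos_left t hn),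
      (IsPeriodicPt.mul_const hx t).eq] at h
  rintro - ⟨i, rfl⟩
  exact hS.iterate i hxS

lemma IsPeriodicOrbit.isMinimalSet [TopologicalSpace X] [T1Space X] {P : Set X}
    (hP : IsPeriodicOrbit f P) : IsMinimalSet f P := by
  refine ⟨?_, hP.finite.isClosed, hP.mapsTo.image_subset, fun M hMP hM _ hfM => ?_⟩
  · obtain ⟨x, n, -, -, rfl⟩ := hP
    exact ⟨x, 0, rfl⟩
  refine hMP.antisymm ((hP.disjoint_or_subset (mapsTo_iff_image_subset.2 hfM)).resolve_left ?_)
  obtain ⟨z, hz⟩ := hM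
  exact not_disjoint_iff.2 ⟨z, hMP hz, hz⟩

lemma domainSet_subset_coreSet {m : ℕ} (hm : m ≤ 1) (H : Fin m → Set X) :
    domainSet f H ⊆ coreSet f H := by
  have := Fin.subsingleton_iff_le_one.2 hm
  intro x hx
  simp only [coreSet, centerSet, domainSet, mem_iInter, mem_preimage, mem_iUnion] at hx ⊢
  intro k i
  obtain ⟨j, hj⟩ := hx k
  exact Subsingleton.elim j i ▸ hj

end MinimalSets

section Window

variable {X : Type*} {f : X → X} {m : ℕ} {H : Fin m → Set X} {V W : Set X} {n : ℕ}

def windowTrap (f : X → X) (H : Fin m → Set X) (V : Set X) (n L : ℕ) : Set X :=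
  {z | (∀ j < L, f^[j] z ∈ centerSet H) ∧ ∀ k, k + n ≤ L → ∃ i < n, f^[k + i] z ∉ V}

lemma isClosed_windowTrap [TopologicalSpace X] (hf : Continuous f) (hH : ∀ i, IsClosed (H i))
    (hV : IsOpen V) (n L : ℕ) : IsClosed (windowTrap f H V n L) := by
  have hC : IsClosed (centerSet H) := isClosed_iInter hH
  have h : windowTrap f H V n L = (⋂ j ∈ Iio L, f^[j] ⁻¹' centerSet H) ∩
      ⋂ k ∈ {k | k + n ≤ L}, ⋃ i ∈ Iio n, f^[k + i] ⁻¹' Vᶜ := by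
    ext z
    simp [windowTrap]
  rw [h]
  exact (isClosed_biInter fun j _ => hC.preimage (hf.iterate j)).inter
    (isClosed_biInter fun k _ => (finite_Iio n).isClosed_biUnion fun i _ =>
      hV.isClosed_compl.preimage (hf.iterate _))

lemma windowTrap_succ_subset (L : ℕ) :
    windowTrap f H V n (L + 1) ⊆ windowTrap f H V n L :=
  fun _ hz => ⟨fun j hj => hz.1 j (by omega), fun k hk => hz.2 k (by omega)⟩

lemma mapsTo_windowTrap_succ (L : ℕ) :
    MapsTo f (windowTrap f H V n (L + 1)) (windowTrap f H V n L) := by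
  rintro z ⟨hC, hV⟩
  refine ⟨fun j hj => ?_, fun k hk => ?_⟩
  · simpa only [← iterate_succ_apply] using hC (j + 1) (by omega)
  · obtain ⟨i, hi, hiV⟩ := hV (k + 1) (by omega)
    refine ⟨i, hi, ?_⟩
    rwa [← iterate_succ_apply, show (k + i).succ = k + 1 + i by omega]

lemma eventually_windowTrap_eq_empty [TopologicalSpace X] [CompactSpace X] (hf : Continuous f)
    (hH : ∀ i, IsClosed (H i)) (hV : IsOpen V) (hWV : W ⊆ V)
    (hmin : ∀ M : Set X, IsMinimalSet f M → M ⊆ coreSet f H → M ⊆ W) (n : ℕ) :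
    ∀ᶠ L in atTop, windowTrap f H V n L = ∅ := by
  -- Otherwise `⋂ L, windowTrap f H V n L` is a nonempty closed invariant subset of the core; a
  -- minimal set inside it lies in `W ⊆ V`, yet leaves `V` within any `n` steps.
  obtain ⟨L, hL⟩ : ∃ L, windowTrap f H V n L = ∅ := by
    by_contra! hne
    have hF : (⋂ L, windowTrap f H V n L).Nonempty :=
      IsCompact.nonempty_iInter_of_sequence_nonempty_isCompact_isClosed _ windowTrap_succ_subset
        hne (isClosed_windowTrap hf hH hV n 0).isCompact
        (isClosed_windowTrap hf hH hV n)
    obtain ⟨M, hMF, hM⟩ := exists_isMinimalSet_subset (f := f)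
      (isClosed_iInter (isClosed_windowTrap hf hH hV n)) hF
      (MapsTo.image_subset fun z hz => mem_iInter.2 fun L =>
        mapsTo_windowTrap_succ L (mem_iInter.1 hz (L + 1)))
    have hMW : M ⊆ W := hmin M hM fun z hz =>
      mem_iInter.2 fun j => (mem_iInter.1 (hMF hz) (j + 1)).1 j j.lt_succ_self
    obtain ⟨z, hz⟩ := hM.1
    obtain ⟨i, -, hi⟩ := (mem_iInter.1 (hMF hz) n).2 0 (by omega)
    exact hi (hWV (hMW ((mapsTo_iff_image_subset.2 hM.2.2.1).iterate _ hz)))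
  exact eventually_atTop.2 ⟨L, fun L' hL' => subset_empty_iff.1
    (hL ▸ antitone_nat_of_succ_le windowTrap_succ_subset hL')⟩

lemma exists_ncard_itinN_le_lt_pow [TopologicalSpace X] [CompactSpace X] (hf : Continuous f)
    (hm : 2 ≤ m) (hH : ∀ i, IsClosed (H i)) (hV : V ∈ 𝓝ˢ W)
    (hmin : ∀ M : Set X, IsMinimalSet f M → M ⊆ coreSet f H → M ⊆ W) {Λ : Set (ℕ → Fin m)}
    (hΛ : ∀ (x : X) (n : ℕ), 1 ≤ n → (∀ i < n, f^[i] x ∈ V \ W) → itinN f H n x ⊆ initWords Λ n)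
    (hn : 0 < n) (hΛn : initWords Λ n ≠ univ) :
    ∃ L B : ℕ, 0 < L ∧ 0 < B ∧ B < m ^ L ∧
      ∀ z, (∀ j, f^[j] z ∉ W) → (itinN f H L z).ncard ≤ B := by
  obtain ⟨U, hU, hWU, hUV⟩ := mem_nhdsSet_iff_exists.1 hV
  obtain ⟨L, hL, hnL⟩ :=
    ((eventually_windowTrap_eq_empty hf hH hU hWU hmin n).and (eventually_ge_atTop (n + 1))).exists
  have hK : (initWords Λ n).ncard < m ^ n := by
    simpa using ncard_lt_ncard (ssubset_univ_iff.2 hΛn)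
  have hpow : ∀ k ≤ L, m ^ L = m ^ k * m ^ (L - k) := fun k hk => by
    rw [← pow_add, Nat.add_sub_cancel' hk]
  refine ⟨L, max ((m - 1) * m ^ (L - 1)) ((initWords Λ n).ncard * m ^ (L - n)), by omega,
    lt_max_of_lt_left (Nat.mul_pos (by omega) (by positivity)), max_lt ?_ ?_, fun z hz => ?_⟩
  · rw [hpow 1 (by omega), pow_one]
    exact Nat.mul_lt_mul_of_pos_right (by omega) (by positivity)
  · rw [hpow n (by omega)]
    exact Nat.mul_lt_mul_of_pos_right hK (by positivity)
  have hz' : z ∉ windowTrap f H U n L := hL ▸ notMem_empty z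
  simp only [windowTrap, mem_ofPred_eq, not_and_or] at hz'
  push Not at hz'
  rcases hz' with ⟨j, hj, hjC⟩ | ⟨k, hk, hkU⟩
  · exact (ncard_itinN_le_of_iterate (by omega) (ncard_itinN_one_le_of_notMem_centerSet hjC)).trans
      (le_max_left _ _)
  · refine (ncard_itinN_le_of_iterate hk (ncard_le_ncard (hΛ _ n hn fun i hi => ?_))).trans
      (le_max_right _ _)
    rw [← iterate_add_apply, add_comm]
    exact ⟨hUV (hkU i hi), hz _⟩

end Window

lemma virtualEntropy_le_of_ncard_itinN_le {X : Type*} {f : X → X} {m : ℕ} {H : Fin m → Set X}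
    {W : Set X} {L B : ℕ} (hm : m ≠ 0) (hL : 0 < L)
    (hB : ∀ z, (∀ j, f^[j] z ∉ W) → (itinN f H L z).ncard ≤ B) {P : Set X}
    (hP : IsPeriodicOrbit f P) (hPW : Disjoint P W) :
    virtualEntropy f H P ≤ ENNReal.log B / L := by
  refine coverEntropy_le_of_ncard_initWords_le (K := P.ncard * m ^ L) hL.ne' fun n => ?_
  rw [mul_assoc]
  refine ncard_initWords_itinSet_le hP.finite fun z hz =>
    ncard_itinN_le_of_forall_iterate hm hL (fun t => hB _ fun j => ?_) n
  rw [← iterate_add_apply]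
  exact disjoint_left.1 hPW (hP.mapsTo.iterate _ hz)

theorem virtualEntropy_periodic_orbit_bound_general [MetricSpace X] [CompactSpace X]
    {f : X → X} (hf : Continuous f) {m : ℕ} {H : Fin m → Set X}
    (hH : IsClosedShiftSystem f H) {W : Set X} (hdiv : LocallyDivides f H W)
    (hmin : ∀ M : Set X, IsMinimalSet f M → M ⊆ coreSet f H → M ⊆ W) :
    ∃ β : ℝ, β < Real.log m ∧
      ∀ P : Set X, IsPeriodicOrbit f P → P ⊆ domainSet f H → ¬ P ⊆ W →
        virtualEntropy f H P ≤ (β : EReal) := by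
  obtain ⟨hfW, -, Λ, hΛ, -, hΛent, V, hV, hΛV⟩ := hdiv
  rcases lt_or_ge m 2 with hm1 | hm2
  · exact ⟨Real.log m - 1, by linarith, fun P hP hPD hPW =>
      (hPW (hmin P hP.isMinimalSet (hPD.trans (domainSet_subset_coreSet (by omega) H)))).elim⟩
  obtain ⟨n, hn, hΛn⟩ := exists_initWords_ne_univ (by omega) hΛ hΛent
  obtain ⟨L, B, hL, hB, hBL, hwin⟩ := exists_ncard_itinN_le_lt_pow hf hm2 hH.2 hV hmin hΛV hn hΛn
  refine ⟨Real.log B / L, ?_, fun P hP _ hPW => ?_⟩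
  · rw [div_lt_iff₀ (by positivity), mul_comm, ← Real.log_pow]
    exact Real.log_lt_log (by positivity) (by exact_mod_cast hBL)
  calc virtualEntropy f H P ≤ ENNReal.log B / L := virtualEntropy_le_of_ncard_itinN_le (by omega)
        hL hwin hP ((hP.disjoint_or_subset (mapsTo_iff_image_subset.2 hfW)).resolve_right hPW)
    _ = (Real.log B / L : ℝ) := by rw [ENNReal.log_natCast hB.ne', EReal.coe_div]; rfl

/-- If `W` locally divides `H` and contains every minimal set contained in the core, then
there is `β < log m` bounding the virtual entropy of every periodic orbit contained in the
domain `D(H)` but not contained in `W`. -/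
theorem virtualEntropy_periodic_orbit_bound [MetricSpace X] [CompactSpace X]
    {f : X → X} (hf : Continuous f) {m : ℕ} (hm : 1 ≤ m) {H : Fin m → Set X}
    (hH : IsClosedShiftSystem f H) {W : Set X} (hdiv : LocallyDivides f H W)
    (hmin : ∀ M : Set X, IsMinimalSet f M → M ⊆ coreSet f H → M ⊆ W) :
    ∃ β : ℝ, β < Real.log m ∧
      ∀ P : Set X, IsPeriodicOrbit f P → P ⊆ domainSet f H → ¬ P ⊆ W →
        virtualEntropy f H P ≤ (β : EReal) :=
  virtualEntropy_periodic_orbit_bound_general hf hH hdiv hmin
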